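/- Let A ∈ ℝ^{n×n} be nonsingular with A⁻¹ ≥ 0 (entrywise). Let A = M − N = P − Q be two regular splittings of A (i.e. M⁻¹ ≥ 0, N ≥ 0, P⁻¹ ≥ 0, Q ≥ 0 entrywise), and suppose P⁻¹ ≥ M⁻¹ entrywise. Then the spectral radii satisfy ρ(P⁻¹Q) ≤ ρ(M⁻¹N). -/

import Mathlib

open Matrix Filter

noncomputable section

/-- Comparison matrix `⟨A⟩`: `α_ii = |a_ii|`, `α_ij = -|a_ij|` for `i ≠ j`. -/
def cmpMat {n : ℕ} (A : Matrix (Fin n) (Fin n) ℝ) : Matrix (Fin n) (Fin n) ℝ :=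
  Matrix.of fun i j => if i = j then |A i j| else -|A i j|

/-- Entrywise absolute value of a matrix. -/
def absMat {n : ℕ} (A : Matrix (Fin n) (Fin n) ℝ) : Matrix (Fin n) (Fin n) ℝ :=
  Matrix.of fun i j => |A i j|

/-- `A` is an M-matrix: nonpositive off-diagonal entries, nonsingular,
and entrywise nonnegative inverse. -/
def IsMMat {n : ℕ} (A : Matrix (Fin n) (Fin n) ℝ) : Prop :=
  (∀ i j, i ≠ j → A i j ≤ 0) ∧ IsUnit A.det ∧ ∀ i j, 0 ≤ A⁻¹ i j

/-- `A` is an H-matrix: its comparison matrix is an M-matrix. -/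
def IsHMat {n : ℕ} (A : Matrix (Fin n) (Fin n) ℝ) : Prop := IsMMat (cmpMat A)

/-- `A` is an H₊-matrix: an H-matrix with positive diagonal entries. -/
def IsHpMat {n : ℕ} (A : Matrix (Fin n) (Fin n) ℝ) : Prop :=
  IsHMat A ∧ ∀ i, 0 < A i i

/-- Spectral radius of a real matrix: supremum of moduli of its complex eigenvalues. -/
def specRad {n : ℕ} (A : Matrix (Fin n) (Fin n) ℝ) : ℝ :=
  sSup {r : ℝ | ∃ μ : ℂ, μ ∈ spectrum ℂ (A.map Complex.ofReal) ∧ r = ‖μ‖}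

/-- Matrix ∞-norm: maximum absolute row sum. -/
def infNorm {n : ℕ} (A : Matrix (Fin n) (Fin n) ℝ) : ℝ :=
  ⨆ i, ∑ j, |A i j|

/-- `x` solves the linear complementarity problem LCP(A, f):
`x ≥ 0`, `Ax - f ≥ 0`, `xᵀ(Ax - f) = 0`. -/
def SolvesLCP {n : ℕ} (A : Matrix (Fin n) (Fin n) ℝ) (f x : Fin n → ℝ) : Prop :=
  (∀ j, 0 ≤ x j) ∧ (∀ j, f j ≤ (A *ᵥ x) j) ∧ ∑ j, x j * ((A *ᵥ x) j - f j) = 0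

end

/-!
Write `σ = ρ(P⁻¹Q)` and take a Perron–Frobenius vector `x ≥ 0`, `x ≠ 0`, `P⁻¹Q x = σ x`. Then
`Qx = σ Px`, so `Px ≥ 0` and `Ax = (1 - σ) Px`; since `A⁻¹ ≥ 0` this forces `σ < 1`, hence
`Ax ≥ 0`. Consequently `M⁻¹Ax ≤ P⁻¹Ax = (1 - σ) x`, that is `M⁻¹N x = x - M⁻¹Ax ≥ σ x`, and a
nonnegative matrix with such a subinvariant vector has spectral radius at least `σ`.

The Perron–Frobenius vector of a nonnegative `B` is a limit point of the normalised vectors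
`(t - B)⁻¹ w` as `t ↓ ρ(B)`, where `w = |z|` for an eigenvector `z` of an eigenvalue of maximal
modulus, so that `ρ(B) w ≤ B w`. Nonnegativity of `(t - B)⁻¹` for `t > ρ(B)` comes from the
Neumann series, which converges by Gelfand's formula.
-/

open Topology

namespace Matrix

variable {l m n : Type*}

def Nonneg (B : Matrix l m ℝ) : Prop := ∀ i j, 0 ≤ B i j

namespace Nonneg

theorem mul [Fintype m] {B : Matrix l m ℝ} {C : Matrix m n ℝ} (hB : B.Nonneg) (hC : C.Nonneg) :
    (B * C).Nonneg := fun i j =>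
  Finset.sum_nonneg fun k _ => mul_nonneg (hB i k) (hC k j)

theorem smul {B : Matrix l m ℝ} (hB : B.Nonneg) {c : ℝ} (hc : 0 ≤ c) : (c • B).Nonneg :=
  fun i j => mul_nonneg hc (hB i j)

theorem pow [Fintype m] [DecidableEq m] {B : Matrix m m ℝ} (hB : B.Nonneg) (k : ℕ) :
    (B ^ k).Nonneg := by
  induction k with
  | zero => intro i j; by_cases h : i = j <;> simp [h]
  | succ k ih => rw [pow_succ]; exact ih.mul hB

theorem mulVec_nonneg [Fintype m] {B : Matrix l m ℝ} (hB : B.Nonneg) {x : m → ℝ} (hx : 0 ≤ x) :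
    0 ≤ B *ᵥ x := fun i =>
  dotProduct_nonneg_of_nonneg (fun j => hB i j) hx

theorem mulVec_mono [Fintype m] {B : Matrix l m ℝ} (hB : B.Nonneg) {x y : m → ℝ} (hxy : x ≤ y) :
    B *ᵥ x ≤ B *ᵥ y := fun i =>
  dotProduct_le_dotProduct_of_nonneg_left hxy fun j => hB i j

end Nonneg

end Matrix

theorem tendsto_pow_atTop_nhds_zero_of_spectralRadius_lt_one {A : Type*} [NormedRing A]
    [NormedAlgebra ℂ A] [CompleteSpace A] {a : A} (h : spectralRadius ℂ a < 1) :
    Tendsto (a ^ ·) atTop (𝓝 0) := by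
  obtain ⟨r, hr, hr1⟩ := ENNReal.lt_iff_exists_nnreal_btwn.mp h
  refine squeeze_zero_norm' ?_ (tendsto_pow_atTop_nhds_zero_of_lt_one r.2 (by exact_mod_cast hr1))
  filter_upwards [(spectrum.pow_nnnorm_pow_one_div_tendsto_nhds_spectralRadius a).eventually_lt_const
    hr, eventually_gt_atTop 0] with m hm hm0
  rw [one_div, ENNReal.rpow_inv_lt_iff (by positivity), ENNReal.rpow_natCast] at hm
  exact_mod_cast hm.le

theorem Matrix.exists_mulVec_eq_smul_of_mem_spectrum {K ι : Type*} [Field K] [Fintype ι]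
    [DecidableEq ι] {X : Matrix ι ι K} {μ : K} (hμ : μ ∈ spectrum K X) :
    ∃ z ≠ 0, X *ᵥ z = μ • z := by
  rw [← Matrix.spectrum_toLin', ← Module.End.hasEigenvalue_iff_mem_spectrum] at hμ
  obtain ⟨z, hz⟩ := hμ.exists_hasEigenvector
  exact ⟨z, hz.2, by simpa using hz.apply_eq_smul⟩

theorem Matrix.Nonneg.norm_smul_le_mulVec_norm {ι : Type*} [Fintype ι] {B : Matrix ι ι ℝ}
    (hB : B.Nonneg) {z : ι → ℂ} {μ : ℂ} (hz : B.map Complex.ofReal *ᵥ z = μ • z) :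
    ‖μ‖ • (fun i => ‖z i‖) ≤ B *ᵥ fun i => ‖z i‖ := fun i =>
  calc ‖μ‖ * ‖z i‖ = ‖(B.map Complex.ofReal *ᵥ z) i‖ := by
        rw [hz, Pi.smul_apply, smul_eq_mul, norm_mul]
    _ = ‖∑ j, (B i j : ℂ) * z j‖ := rfl
    _ ≤ ∑ j, ‖(B i j : ℂ) * z j‖ := norm_sum_le _ _
    _ = (B *ᵥ fun i => ‖z i‖) i := by
        simp [Matrix.mulVec, dotProduct, abs_of_nonneg (hB i _)]

theorem exists_pos_smul_mem_stdSimplex {ι : Type*} [Fintype ι] {v : ι → ℝ} (hv : 0 ≤ v)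
    (hv0 : v ≠ 0) : ∃ c : ℝ, 0 < c ∧ c • v ∈ stdSimplex ℝ ι := by
  obtain ⟨i, hi⟩ := Function.ne_iff.mp hv0
  have hsum : 0 < ∑ i, v i :=
    Finset.sum_pos' (fun i _ => hv i) ⟨i, Finset.mem_univ i, (hv i).lt_of_ne' hi⟩
  refine ⟨(∑ i, v i)⁻¹, inv_pos.2 hsum, fun j => mul_nonneg (inv_nonneg.2 hsum.le) (hv j), ?_⟩
  simp [← Finset.mul_sum, hsum.ne']

theorem exists_mem_stdSimplex_mulVec_eq_smul_of_tendsto {ι : Type*} [Fintype ι]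
    {B : Matrix ι ι ℝ} {w : ι → ℝ} {ρ : ℝ} {x : ℕ → ι → ℝ} {t s : ℕ → ℝ}
    (hx : ∀ k, x k ∈ stdSimplex ℝ ι) (ht : Tendsto t atTop (𝓝 ρ)) (hs : Tendsto s atTop (𝓝 0))
    (hBx : ∀ k, B *ᵥ x k = t k • x k - s k • w) : ∃ x ∈ stdSimplex ℝ ι, B *ᵥ x = ρ • x := by
  obtain ⟨x₀, hx₀, φ, hφ, hlim⟩ := (isCompact_stdSimplex ℝ ι).tendsto_subseq hx
  refine ⟨x₀, hx₀, tendsto_nhds_unique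
    ((continuous_const.matrix_mulVec continuous_id).continuousAt.tendsto.comp hlim) ?_⟩
  have := ((ht.comp hφ.tendsto_atTop).smul hlim).sub
    ((hs.comp hφ.tendsto_atTop).smul (tendsto_const_nhds (x := w)))
  simpa [Function.comp_def, hBx] using this

theorem Matrix.mulVec_nonneg_of_splitting_of_mulVec_eq_smul {ι : Type*} [Fintype ι]
    [DecidableEq ι] {A P Q : Matrix ι ι ℝ} (hA : IsUnit A.det) (hAinv : A⁻¹.Nonneg)
    (hPQ : A = P - Q) (hP : IsUnit P.det) (hQ : Q.Nonneg) {x : ι → ℝ} (hx : 0 ≤ x)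
    (hx0 : x ≠ 0) {σ : ℝ} (hσ : 0 < σ) (hSx : (P⁻¹ * Q) *ᵥ x = σ • x) : 0 ≤ A *ᵥ x := by
  have hQx : Q *ᵥ x = σ • (P *ᵥ x) := by
    rw [← Matrix.mulVec_smul, ← hSx, Matrix.mulVec_mulVec, ← Matrix.mul_assoc,
      Matrix.mul_nonsing_inv _ hP, Matrix.one_mul]
  have hPx : 0 ≤ P *ᵥ x := (smul_nonneg_iff_nonneg_of_pos_left hσ).mp (hQx ▸ hQ.mulVec_nonneg hx)
  have hAx : A *ᵥ x = (1 - σ) • (P *ᵥ x) := by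
    rw [hPQ, Matrix.sub_mulVec, hQx, sub_smul, one_smul]
  rw [hAx]
  refine smul_nonneg ?_ hPx
  by_contra! hσ1
  have hxle : x ≤ 0 := by
    have hx_eq : x = (1 - σ) • (A⁻¹ *ᵥ (P *ᵥ x)) := by
      rw [← Matrix.mulVec_smul, ← hAx, Matrix.mulVec_mulVec, Matrix.nonsing_inv_mul _ hA,
        Matrix.one_mulVec]
    rw [hx_eq]
    exact smul_nonpos_of_nonpos_of_nonneg hσ1.le (hAinv.mulVec_nonneg hPx)
  exact hx0 (le_antisymm hxle hx)

section SpectralRadius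

variable {n : ℕ}

theorem specRad_eq_sSup_image (B : Matrix (Fin n) (Fin n) ℝ) :
    specRad B = sSup ((‖·‖) '' spectrum ℂ (B.map Complex.ofReal)) := by
  simp only [specRad, Set.image, eq_comm]

theorem norm_le_specRad {B : Matrix (Fin n) (Fin n) ℝ} {μ : ℂ}
    (hμ : μ ∈ spectrum ℂ (B.map Complex.ofReal)) : ‖μ‖ ≤ specRad B := by
  rw [specRad_eq_sSup_image]
  exact le_csSup ((B.map _).finite_spectrum.image _).bddAbove (Set.mem_image_of_mem _ hμ)

theorem specRad_nonneg (B : Matrix (Fin n) (Fin n) ℝ) : 0 ≤ specRad B := by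
  rw [specRad_eq_sSup_image]
  exact Real.sSup_nonneg (by rintro _ ⟨μ, -, rfl⟩; exact norm_nonneg μ)

theorem exists_mem_spectrum_norm_eq_specRad {B : Matrix (Fin n) (Fin n) ℝ}
    (h : 0 < specRad B) : ∃ μ ∈ spectrum ℂ (B.map Complex.ofReal), ‖μ‖ = specRad B := by
  rw [specRad_eq_sSup_image] at h ⊢
  have hne : ((‖·‖) '' spectrum ℂ (B.map Complex.ofReal)).Nonempty := by
    by_contra hne
    simp [Set.not_nonempty_iff_eq_empty.mp hne] at h
  exact hne.csSup_mem ((B.map _).finite_spectrum.image _)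

theorem specRad_smul_le (B : Matrix (Fin n) (Fin n) ℝ) {c : ℝ} (hc : 0 < c) :
    specRad (c • B) ≤ c * specRad B := by
  rw [specRad_eq_sSup_image]
  refine Real.sSup_le ?_ (mul_nonneg hc.le (specRad_nonneg B))
  rintro _ ⟨μ, hμ, rfl⟩
  have hmap : (c • B).map Complex.ofReal =
      Units.mk0 (c : ℂ) (by exact_mod_cast hc.ne') • B.map Complex.ofReal := by
    ext; simp
  rw [hmap, spectrum.unit_smul_eq_smul, Set.mem_smul_set] at hμ
  obtain ⟨ν, hν, rfl⟩ := hμ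
  simp only [Units.smul_mk0, norm_smul, Complex.norm_real, Real.norm_of_nonneg hc.le]
  exact mul_le_mul_of_nonneg_left (norm_le_specRad hν) hc.le

theorem isUnit_det_smul_one_sub {B : Matrix (Fin n) (Fin n) ℝ} {t : ℝ} (h : specRad B < t) :
    IsUnit (t • 1 - B).det := by
  have ht : 0 < t := (specRad_nonneg B).trans_lt h
  have hnot : (t : ℂ) ∉ spectrum ℂ (B.map Complex.ofReal) := fun hmem => by
    have := norm_le_specRad hmem
    rw [Complex.norm_real, Real.norm_of_nonneg ht.le] at this
    linarith
  have hmap : algebraMap ℂ _ (t : ℂ) - B.map Complex.ofReal =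
      Complex.ofRealHom.mapMatrix (t • 1 - B) := by
    ext i j
    by_cases hij : i = j <;> simp [hij, Matrix.algebraMap_eq_diagonal]
  rw [spectrum.notMem_iff, hmap, isUnit_iff_isUnit_det, ← RingHom.map_det] at hnot
  rw [isUnit_iff_ne_zero] at hnot ⊢
  exact fun h0 => hnot (by simp [h0])

theorem spectralRadius_le_ofReal_specRad (B : Matrix (Fin n) (Fin n) ℝ) :
    spectralRadius ℂ (B.map Complex.ofReal) ≤ ENNReal.ofReal (specRad B) :=
  iSup₂_le fun μ hμ => by
    rw [← ENNReal.ofReal_coe_nnreal, coe_nnnorm]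
    exact ENNReal.ofReal_le_ofReal (norm_le_specRad hμ)

section LinftyOpNorm

-- Any Banach-algebra norm would do: only the entrywise limit survives the section.
attribute [local instance] Matrix.linftyOpNormedRing Matrix.linftyOpNormedAlgebra

theorem tendsto_pow_apply_atTop_nhds_zero_of_specRad_lt_one {B : Matrix (Fin n) (Fin n) ℝ}
    (h : specRad B < 1) (i j : Fin n) : Tendsto (fun m => (B ^ m) i j) atTop (𝓝 0) := by
  have hρ : spectralRadius ℂ (B.map Complex.ofReal) < 1 :=
    (spectralRadius_le_ofReal_specRad B).trans_lt (ENNReal.ofReal_lt_one.mpr h)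
  refine squeeze_zero_norm (fun m => ?_) (tendsto_zero_iff_norm_tendsto_zero.mp
    (tendsto_pow_atTop_nhds_zero_of_spectralRadius_lt_one hρ))
  calc ‖(B ^ m) i j‖ = ‖((B ^ m).map Complex.ofReal) i j‖ := by simp
    _ = ‖(B.map Complex.ofReal ^ m *ᵥ Pi.single j 1) i‖ := by
        rw [Matrix.mulVec_single_one]
        exact congrArg (‖· i j‖) (Matrix.map_pow B Complex.ofRealHom m)
    _ ≤ ‖B.map Complex.ofReal ^ m *ᵥ Pi.single j 1‖ := norm_le_pi_norm _ i
    _ ≤ ‖B.map Complex.ofReal ^ m‖ * ‖(Pi.single j 1 : Fin n → ℂ)‖ :=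
        Matrix.linfty_opNorm_mulVec _ _
    _ = ‖B.map Complex.ofReal ^ m‖ := by rw [Pi.norm_single, norm_one, mul_one]

end LinftyOpNorm

theorem Matrix.Nonneg.inv_one_sub {B : Matrix (Fin n) (Fin n) ℝ} (hB : B.Nonneg)
    (h : specRad B < 1) : (1 - B)⁻¹.Nonneg := by
  have hdet : IsUnit (1 - B).det := by simpa using isUnit_det_smul_one_sub h
  have hpartial : ∀ m, ∑ k ∈ Finset.range m, B ^ k = (1 - B)⁻¹ - (1 - B)⁻¹ * B ^ m := fun m => by
    rw [← Matrix.mul_one (1 - B)⁻¹, Matrix.mul_assoc, ← Matrix.mul_sub, Matrix.one_mul,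
      ← mul_neg_geom_sum, ← Matrix.mul_assoc, Matrix.nonsing_inv_mul _ hdet, Matrix.one_mul]
  intro i j
  have hlim : Tendsto (fun m => (∑ k ∈ Finset.range m, B ^ k) i j) atTop (𝓝 ((1 - B)⁻¹ i j)) := by
    simp only [hpartial, Matrix.sub_apply, Matrix.mul_apply]
    simpa using tendsto_const_nhds.sub (tendsto_finsetSum _ fun l _ =>
      (tendsto_pow_apply_atTop_nhds_zero_of_specRad_lt_one h l j).const_mul ((1 - B)⁻¹ i l))
  refine ge_of_tendsto hlim (Eventually.of_forall fun m => ?_)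
  rw [Matrix.sum_apply]
  exact Finset.sum_nonneg fun k _ => hB.pow k i j

theorem Matrix.Nonneg.inv_smul_one_sub {B : Matrix (Fin n) (Fin n) ℝ} (hB : B.Nonneg) {t : ℝ}
    (h : specRad B < t) : (t • 1 - B)⁻¹.Nonneg := by
  have ht : 0 < t := (specRad_nonneg B).trans_lt h
  have hlt : specRad (t⁻¹ • B) < 1 := (specRad_smul_le B (inv_pos.2 ht)).trans_lt
    (by rwa [inv_mul_lt_iff₀ ht, mul_one])
  have heq : t • 1 - B = Units.mk0 t ht.ne' • (1 - t⁻¹ • B) := by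
    simp [Units.smul_def, smul_sub, smul_smul, ht.ne']
  rw [heq, Matrix.inv_smul' _ _ (by simpa using isUnit_det_smul_one_sub hlt)]
  exact ((hB.smul (inv_nonneg.2 ht.le)).inv_one_sub hlt).smul (by simpa using ht.le)

theorem Matrix.Nonneg.exists_mem_stdSimplex_specRad_smul_le_mulVec
    {B : Matrix (Fin n) (Fin n) ℝ} (hB : B.Nonneg) (h : 0 < specRad B) :
    ∃ w ∈ stdSimplex ℝ (Fin n), specRad B • w ≤ B *ᵥ w := by
  obtain ⟨μ, hμ, hμρ⟩ := exists_mem_spectrum_norm_eq_specRad h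
  obtain ⟨z, hz0, hz⟩ := Matrix.exists_mulVec_eq_smul_of_mem_spectrum hμ
  obtain ⟨c, hc, hw⟩ := exists_pos_smul_mem_stdSimplex (v := fun i => ‖z i‖)
    (fun i => norm_nonneg _) (fun h0 => hz0 (funext fun i => norm_eq_zero.1 (congrFun h0 i)))
  refine ⟨_, hw, ?_⟩
  rw [Matrix.mulVec_smul, smul_comm, ← hμρ]
  exact smul_le_smul_of_nonneg_left (hB.norm_smul_le_mulVec_norm hz) hc.le

theorem Matrix.Nonneg.exists_mem_stdSimplex_mulVec_eq_sub {B : Matrix (Fin n) (Fin n) ℝ}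
    (hB : B.Nonneg) {w : Fin n → ℝ} (hw : w ∈ stdSimplex ℝ (Fin n))
    (hBw : specRad B • w ≤ B *ᵥ w) {t : ℝ} (ht : specRad B < t) :
    ∃ x ∈ stdSimplex ℝ (Fin n), ∃ s ∈ Set.Icc 0 (t - specRad B), B *ᵥ x = t • x - s • w := by
  have hR := hB.inv_smul_one_sub ht
  set y := (t • 1 - B)⁻¹ *ᵥ w
  have hy : (t • 1 - B) *ᵥ y = w := by
    rw [Matrix.mulVec_mulVec, Matrix.mul_nonsing_inv _ (isUnit_det_smul_one_sub ht),
      Matrix.one_mulVec]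
  have hw_le : w ≤ (t - specRad B) • y := by
    have hres : (t • 1 - B) *ᵥ w ≤ (t - specRad B) • w := by
      rw [Matrix.sub_mulVec, Matrix.smul_mulVec, Matrix.one_mulVec, sub_smul]
      exact sub_le_sub_left hBw _
    calc w = (t • 1 - B)⁻¹ *ᵥ ((t • 1 - B) *ᵥ w) := by
          rw [Matrix.mulVec_mulVec, Matrix.nonsing_inv_mul _ (isUnit_det_smul_one_sub ht),
            Matrix.one_mulVec]
      _ ≤ (t • 1 - B)⁻¹ *ᵥ ((t - specRad B) • w) := hR.mulVec_mono hres
      _ = (t - specRad B) • y := Matrix.mulVec_smul _ _ _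
  have hy0 : y ≠ 0 := fun h0 => by
    rw [h0, Matrix.mulVec_zero] at hy
    simpa [← hy] using hw.2
  obtain ⟨c, hc, hx⟩ := exists_pos_smul_mem_stdSimplex (hR.mulVec_nonneg hw.1) hy0
  refine ⟨c • y, hx, c, ⟨hc.le, ?_⟩, ?_⟩
  · have hsum := Finset.sum_le_sum fun i (_ : i ∈ Finset.univ) => hw_le i
    simp only [Pi.smul_apply, smul_eq_mul, ← Finset.mul_sum, hw.2] at hsum
    have hcy : c * ∑ i, y i = 1 := by simpa [Finset.mul_sum] using hx.2
    nlinarith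
  · have hBy : B *ᵥ y = t • y - w := by
      rw [← hy, Matrix.sub_mulVec, Matrix.smul_mulVec, Matrix.one_mulVec, sub_sub_cancel]
    rw [Matrix.mulVec_smul, hBy, smul_sub, smul_comm]

theorem Matrix.Nonneg.exists_mem_stdSimplex_mulVec_eq_specRad_smul
    {B : Matrix (Fin n) (Fin n) ℝ} (hB : B.Nonneg) (h : 0 < specRad B) :
    ∃ x ∈ stdSimplex ℝ (Fin n), B *ᵥ x = specRad B • x := by
  obtain ⟨w, hw, hBw⟩ := hB.exists_mem_stdSimplex_specRad_smul_le_mulVec h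
  have ht : ∀ k : ℕ, specRad B < specRad B + 1 / (k + 1) := fun k =>
    lt_add_of_pos_right _ (by positivity)
  choose x hx s hs hBx using fun k => hB.exists_mem_stdSimplex_mulVec_eq_sub hw hBw (ht k)
  refine exists_mem_stdSimplex_mulVec_eq_smul_of_tendsto hx ?_ ?_ hBx
  · simpa using tendsto_const_nhds.add (tendsto_one_div_add_atTop_nhds_zero_nat (𝕜 := ℝ))
  · exact squeeze_zero (fun k => (hs k).1) (fun k => (hs k).2.trans (by simp))
      tendsto_one_div_add_atTop_nhds_zero_nat

theorem Matrix.Nonneg.le_specRad_of_smul_le_mulVec {T : Matrix (Fin n) (Fin n) ℝ}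
    (hT : T.Nonneg) {x : Fin n → ℝ} (hx : 0 ≤ x) (hx0 : x ≠ 0) {σ : ℝ}
    (h : σ • x ≤ T *ᵥ x) : σ ≤ specRad T := by
  by_contra! hlt
  have hv : 0 ≤ (σ • 1 - T) *ᵥ (-x) := by
    rw [Matrix.mulVec_neg, Matrix.sub_mulVec, Matrix.smul_mulVec, Matrix.one_mulVec,
      neg_nonneg, sub_nonpos]
    exact h
  have hneg := (hT.inv_smul_one_sub hlt).mulVec_nonneg hv
  rw [Matrix.mulVec_mulVec, Matrix.nonsing_inv_mul _ (isUnit_det_smul_one_sub hlt),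
    Matrix.one_mulVec, neg_nonneg] at hneg
  exact hx0 (le_antisymm hneg hx)

end SpectralRadius

/-- Lemma 2.7: comparison of regular splittings. If `A⁻¹ ≥ 0`,
`A = M - N = P - Q` are regular splittings and `P⁻¹ ≥ M⁻¹` entrywise,
then `ρ(P⁻¹ Q) ≤ ρ(M⁻¹ N)`. -/
theorem specRad_le_of_regular_splittings {n : ℕ}
    (A M N P Q : Matrix (Fin n) (Fin n) ℝ)
    (hA : IsUnit A.det) (hAinv : ∀ i j, 0 ≤ A⁻¹ i j)
    (hMN : A = M - N) (hPQ : A = P - Q)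
    (hM : IsUnit M.det) (hMinv : ∀ i j, 0 ≤ M⁻¹ i j) (hN : ∀ i j, 0 ≤ N i j)
    (hP : IsUnit P.det) (hPinv : ∀ i j, 0 ≤ P⁻¹ i j) (hQ : ∀ i j, 0 ≤ Q i j)
    (hPM : ∀ i j, M⁻¹ i j ≤ P⁻¹ i j) :
    specRad (P⁻¹ * Q) ≤ specRad (M⁻¹ * N) := by
  have hS : (P⁻¹ * Q).Nonneg := Matrix.Nonneg.mul hPinv hQ
  rcases (specRad_nonneg (P⁻¹ * Q)).eq_or_lt with hσ | hσ
  · exact hσ ▸ specRad_nonneg _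
  obtain ⟨x, hx, hSx⟩ := hS.exists_mem_stdSimplex_mulVec_eq_specRad_smul hσ
  have hx0 : x ≠ 0 := by
    rintro rfl
    simpa using hx.2
  have hAx : 0 ≤ A *ᵥ x :=
    Matrix.mulVec_nonneg_of_splitting_of_mulVec_eq_smul hA hAinv hPQ hP hQ hx.1 hx0 hσ hSx
  have hPAx : P⁻¹ *ᵥ (A *ᵥ x) = x - specRad (P⁻¹ * Q) • x := by
    rw [← hSx, Matrix.mulVec_mulVec, hPQ, Matrix.mul_sub,
      Matrix.nonsing_inv_mul _ hP, Matrix.sub_mulVec, Matrix.one_mulVec]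
  have hMAx : M⁻¹ *ᵥ (A *ᵥ x) ≤ P⁻¹ *ᵥ (A *ᵥ x) := by
    have hPM' : (P⁻¹ - M⁻¹).Nonneg := fun i j => sub_nonneg.2 (hPM i j)
    have := hPM'.mulVec_nonneg hAx
    rwa [Matrix.sub_mulVec, sub_nonneg] at this
  have hTx : (M⁻¹ * N) *ᵥ x = x - M⁻¹ *ᵥ (A *ᵥ x) := by
    rw [Matrix.mulVec_mulVec, hMN, Matrix.mul_sub, Matrix.nonsing_inv_mul _ hM,
      Matrix.sub_mulVec, Matrix.one_mulVec, sub_sub_cancel]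
  refine (Matrix.Nonneg.mul hMinv hN).le_specRad_of_smul_le_mulVec hx.1 hx0 ?_
  rw [hTx]
  calc specRad (P⁻¹ * Q) • x = x - P⁻¹ *ᵥ (A *ᵥ x) := by rw [hPAx, sub_sub_cancel]
    _ ≤ x - M⁻¹ *ᵥ (A *ᵥ x) := sub_le_sub_left hMAx x
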